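/- arXiv:2310.00201 — 2 statements merged into one kernel-verified Lean document; each statement's English description precedes it below -/
import Mathlib

section
/- For a simplicial object X in an abelian category A, the composite of the inclusion of the normalized chain complex into the Moore complex with the quotient onto the Moore complex modulo degeneracies, N_*(X) → M_*(X) → M_*(X)/D_*(X), is an isomorphism of chain complexes, and both the inclusion N_*(X) → M_*(X) and the quotient M_*(X) → M_*(X)/D_*(X) are quasi-isomorphisms. -/
open CategoryTheory CategoryTheory.Limits AlgebraicTopology

noncomputable section

variable {A : Type*} [Category A] [Abelian A]

/-- The degenerate subobject `D_n(X) ⊆ X_n`: the subobject generated by the images of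
the degeneracy maps `s_0, …, s_{n-1} : X_{n-1} → X_n`. -/
noncomputable def DSub (X : SimplicialObject A) :
    (n : ℕ) → Subobject (X.obj (Opposite.op (SimplexCategory.mk n)))
  | 0 => ⊥
  | (m + 1) => Finset.univ.sup fun i : Fin (m + 1) => Limits.imageSubobject (X.σ i)

/-!
The Dold–Kan projector `P∞ = 1 - Q∞` on the Moore complex is an idempotent chain map with image
`N_*(X)`. It kills every degeneracy, while `Q∞` is a sum of maps factoring through degeneracies;
hence a morphism out of `X_n` vanishes on `D_n(X)` exactly when it factors through `P∞`, and the
kernel of `P∞` in degree `n` is `D_n(X)`. So `N_n(X) → X_n → X_n/D_n(X)` is an isomorphism.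
The inclusion `N_*(X) → M_*(X)` is a homotopy equivalence with inverse `P∞`, and two-out-of-three
for quasi-isomorphisms handles the projection.
-/

open Simplicial AlgebraicTopology.DoldKan

theorem CategoryTheory.Limits.imageSubobject_le_kernelSubobject_iff {Y Z W : A}
    (f : Y ⟶ Z) (g : Z ⟶ W) :
    imageSubobject f ≤ kernelSubobject g ↔ f ≫ g = 0 := by
  refine ⟨fun h => ?_, image_le_kernel f g⟩
  rw [← kernelSubobject_factors_iff]
  simpa using Subobject.factors_of_le _ h (imageSubobject_factors_comp_self f (𝟙 Y))

namespace AlgebraicTopology.DoldKan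

variable {X : SimplicialObject A} {n : ℕ} {T : A}

theorem DSub_le_kernelSubobject_iff (f : X _⦋n⦌ ⟶ T) :
    DSub X n ≤ kernelSubobject f ↔ DegeneraciesVanish f := by
  cases n with
  | zero => simp [DSub]
  | succ m =>
    simp only [DSub, Finset.sup_le_iff, Finset.mem_univ, true_implies,
      imageSubobject_le_kernelSubobject_iff, degeneraciesVanish_succ_iff]

theorem PInfty_f_comp_of_degeneraciesVanish {f : X _⦋n⦌ ⟶ T} (hf : DegeneraciesVanish f) :
    PInfty.f n ≫ f = f := by
  have h := PInfty_f_add_QInfty_f (X := X) n =≫ f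
  rwa [Preadditive.add_comp, (degeneraciesVanish_iff_QInfty_f_comp f).1 hf, add_zero,
    Category.id_comp] at h

theorem comp_PInfty_f_eq_zero_of_kernelSubobject_le {f : X _⦋n⦌ ⟶ T}
    (h : kernelSubobject f ≤ DSub X n) {W : A} (g : W ⟶ X _⦋n⦌) (hg : g ≫ f = 0) :
    g ≫ PInfty.f n = 0 := by
  have hD : DSub X n ≤ kernelSubobject (PInfty.f n) :=
    (DSub_le_kernelSubobject_iff _).2 (degeneraciesVanishPInfty_f X n)
  rw [← kernelSubobject_factors_iff]
  exact Subobject.factors_of_le _ (h.trans hD) (kernelSubobject_factors _ _ hg)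

theorem mono_inclusionOfMooreComplexMap_f_comp {f : X _⦋n⦌ ⟶ T}
    (h : kernelSubobject f ≤ DSub X n) :
    Mono ((inclusionOfMooreComplexMap X).f n ≫ f) := by
  refine Preadditive.mono_of_cancel_zero _ fun g hg => ?_
  have hP : (inclusionOfMooreComplexMap X).f n ≫ PInfty.f n =
      (inclusionOfMooreComplexMap X).f n :=
    HomologicalComplex.congr_hom (inclusionOfMooreComplexMap_comp_PInfty X) n
  rw [← Category.assoc] at hg
  have hg' := comp_PInfty_f_eq_zero_of_kernelSubobject_le h _ hg
  rw [Category.assoc, hP] at hg'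
  have : Mono ((inclusionOfMooreComplexMap X).f n) := by
    rw [inclusionOfMooreComplexMap_f]
    exact Subobject.arrow_mono _
  exact zero_of_comp_mono _ hg'

theorem epi_inclusionOfMooreComplexMap_f_comp {f : X _⦋n⦌ ⟶ T} [Epi f]
    (hf : DegeneraciesVanish f) :
    Epi ((inclusionOfMooreComplexMap X).f n ≫ f) := by
  have h : (PInftyToNormalizedMooreComplex X).f n ≫ (inclusionOfMooreComplexMap X).f n ≫ f =
      f := by
    have hP : (PInftyToNormalizedMooreComplex X).f n ≫ (inclusionOfMooreComplexMap X).f n =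
        PInfty.f n := by
      rw [← PInftyToNormalizedMooreComplex_comp_inclusionOfMooreComplexMap X]
      rfl
    refine (Category.assoc _ _ _).symm.trans ?_
    rw [hP]
    exact PInfty_f_comp_of_degeneraciesVanish hf
  have hepi : Epi f := inferInstance
  rw [← h] at hepi
  exact @epi_of_epi _ _ _ _ _ ((PInftyToNormalizedMooreComplex X).f n) _ hepi

end AlgebraicTopology.DoldKan

/-- For a simplicial object `X` in an abelian category, the composite of the inclusion
`N_*(X) → M_*(X)` of the normalized complex in the Moore complex with the projection onto
the quotient `M_*(X)/D_*(X)` by the degeneracies is an isomorphism, and both the inclusion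
and the projection are quasi-isomorphisms. -/
theorem statement4 (X : SimplicialObject A)
    (Q : ChainComplex A ℕ) (π : (alternatingFaceMapComplex A).obj X ⟶ Q)
    (hepi : ∀ n, Epi (π.f n))
    (hker : ∀ n, Limits.kernelSubobject (π.f n) = DSub X n) :
    IsIso (inclusionOfMooreComplexMap X ≫ π) ∧
      QuasiIso (inclusionOfMooreComplexMap X) ∧ QuasiIso π := by
  have hiso : IsIso (inclusionOfMooreComplexMap X ≫ π) := by
    have (n : ℕ) : IsIso ((inclusionOfMooreComplexMap X ≫ π).f n) := by
      rw [HomologicalComplex.comp_f]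
      have := mono_inclusionOfMooreComplexMap_f_comp (hker n).le
      have := epi_inclusionOfMooreComplexMap_f_comp ((DSub_le_kernelSubobject_iff _).1 (hker n).ge)
      exact isIso_of_mono_of_epi _
    exact HomologicalComplex.Hom.isIso_of_components _
  have hincl : QuasiIso (inclusionOfMooreComplexMap X) :=
    inferInstanceAs (QuasiIso
      (homotopyEquivNormalizedMooreComplexAlternatingFaceMapComplex (Y := X)).hom)
  exact ⟨hiso, hincl, quasiIso_of_comp_left (inclusionOfMooreComplexMap X) π⟩

end
end

section
/- Let A be a Grothendieck abelian category (or R-modules) and let X be a simplicial chain complex in A. The canonical map ‖X‖ → |X| from the fat geometric realization of the underlying semisimplicial object to the geometric realization is a quasi-isomorphism. Equivalently, the map Tot^⊕(N_*(X)) → Tot^⊕(M_*(X)) induced by the inclusion of the normalized complex into the Moore complex is a quasi-isomorphism of chain complexes. -/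
/-!
By Dold–Kan, the inclusion `N(X) → M(X)` of the normalized complex into the Moore complex is a
homotopy equivalence of chain complexes in `Ch(A)`: its retraction is induced by `P∞`, and
`P∞` is homotopic to the identity. A homotopy in the simplicial direction totalizes to a homotopy
of total complexes, so `Tot(N X) → Tot(M X)` is a homotopy equivalence, hence a
quasi-isomorphism.
-/

open CategoryTheory CategoryTheory.Limits AlgebraicTopology HomologicalComplex

noncomputable section

instance : TotalComplexShape (ComplexShape.down ℕ) (ComplexShape.down ℤ) (ComplexShape.down ℤ) where
  π := fun p => (p.1 : ℤ) + p.2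
  ε₁ := fun _ => 1
  ε₂ := fun p => (-1 : ℤˣ) ^ p.1
  rel₁ := by rintro i i' h l; simp only [ComplexShape.down_Rel] at *; omega
  rel₂ := by rintro k i i' h; simp only [ComplexShape.down_Rel] at *; omega
  ε₂_ε₁ := by
    rintro i i' l l' h h'
    simp only [ComplexShape.down_Rel] at h
    subst h
    simp [pow_succ]

namespace HomologicalComplex₂

variable {C : Type*} [Category C] [Preadditive C]

lemma ε₁_down_nat_down_int (pq : ℕ × ℤ) :
    ComplexShape.ε₁ (ComplexShape.down ℕ) (ComplexShape.down ℤ) (ComplexShape.down ℤ) pq = 1 :=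
  rfl

lemma π_down_nat_down_int (pq : ℕ × ℤ) :
    ComplexShape.π (ComplexShape.down ℕ) (ComplexShape.down ℤ) (ComplexShape.down ℤ) pq =
      pq.1 + pq.2 :=
  rfl

lemma ε₂_down_nat_down_int (pq : ℕ × ℤ) :
    ComplexShape.ε₂ (ComplexShape.down ℕ) (ComplexShape.down ℤ) (ComplexShape.down ℤ) pq =
      (-1 : ℤˣ) ^ pq.1 :=
  rfl

variable {K L : HomologicalComplex₂ C (ComplexShape.down ℕ) (ComplexShape.down ℤ)}
  [K.HasTotal (ComplexShape.down ℤ)] [L.HasTotal (ComplexShape.down ℤ)] {f g : K ⟶ L}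

def totalHomotopyHom (h : Homotopy f g) (n m : ℤ) :
    (K.total (ComplexShape.down ℤ)).X n ⟶ (L.total (ComplexShape.down ℤ)).X m :=
  K.totalDesc fun p q _ =>
    (h.hom p (p + 1)).f q ≫ L.ιTotalOrZero (ComplexShape.down ℤ) (p + 1) q m

lemma totalHomotopyHom_eq_zero (h : Homotopy f g) {n m : ℤ} (hnm : n + 1 ≠ m) :
    totalHomotopyHom h n m = 0 := by
  ext p q hpq
  rw [totalHomotopyHom, ι_totalDesc, L.ιTotalOrZero_eq_zero _ _ _ _ (by
    rw [π_down_nat_down_int] at hpq ⊢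
    omega), comp_zero, comp_zero]

lemma ιTotal_totalHomotopyHom_d (h : Homotopy f g) (p : ℕ) (q n : ℤ) (hpq : (p : ℤ) + q = n) :
    K.ιTotal (ComplexShape.down ℤ) p q n hpq ≫ totalHomotopyHom h n (n + 1) ≫
        (L.total (ComplexShape.down ℤ)).d (n + 1) n =
      (h.hom p (p + 1)).f q ≫ (L.d (p + 1) p).f q ≫ L.ιTotal (ComplexShape.down ℤ) p q n hpq -
        ((-1 : ℤˣ) ^ p) • ((K.X p).d q (q - 1) ≫ (h.hom p (p + 1)).f (q - 1) ≫
          L.ιTotal (ComplexShape.down ℤ) (p + 1) (q - 1) n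
            (by rw [π_down_nat_down_int]; omega)) := by
  rw [totalHomotopyHom, K.ι_totalDesc_assoc,
    L.ιTotalOrZero_eq _ _ _ _ (by rw [π_down_nat_down_int]; omega),
    total_d, Preadditive.comp_add, Category.assoc, Category.assoc, L.ι_D₁, L.ι_D₂,
    L.d₁_eq _ (show (ComplexShape.down ℕ).Rel (p + 1) p by simp) q n hpq,
    L.d₂_eq _ (p + 1) (show (ComplexShape.down ℤ).Rel q (q - 1) by simp) n
      (by rw [π_down_nat_down_int]; omega),
    ε₁_down_nat_down_int, ε₂_down_nat_down_int, one_smul, Linear.comp_units_smul,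
    Hom.comm_assoc, pow_succ, mul_neg_one, Units.neg_smul, ← sub_eq_add_neg]

lemma ιTotal_d_totalHomotopyHom (h : Homotopy f g) (p : ℕ) (q n : ℤ) (hpq : (p : ℤ) + q = n) :
    K.ιTotal (ComplexShape.down ℤ) p q n hpq ≫ (K.total (ComplexShape.down ℤ)).d n (n - 1) ≫
        totalHomotopyHom h (n - 1) n =
      (dNext p h.hom).f q ≫ L.ιTotal (ComplexShape.down ℤ) p q n hpq +
        ((-1 : ℤˣ) ^ p) • ((K.X p).d q (q - 1) ≫ (h.hom p (p + 1)).f (q - 1) ≫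
          L.ιTotal (ComplexShape.down ℤ) (p + 1) (q - 1) n
            (by rw [π_down_nat_down_int]; omega)) := by
  rw [total_d, Preadditive.add_comp, Preadditive.comp_add, K.ι_D₁_assoc, K.ι_D₂_assoc,
    K.d₂_eq _ p (show (ComplexShape.down ℤ).Rel q (q - 1) by simp) (n - 1)
      (by rw [π_down_nat_down_int]; omega),
    ε₂_down_nat_down_int, Linear.units_smul_comp, Category.assoc, totalHomotopyHom, ι_totalDesc,
    L.ιTotalOrZero_eq _ _ _ _ (by rw [π_down_nat_down_int]; omega)]
  congr 1
  obtain _ | p := p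
  · rw [K.d₁_eq_zero _ 0 q (n - 1) (by simp), zero_comp, Homotopy.dNext_zero_chainComplex,
      zero_f, zero_comp]
  · rw [K.d₁_eq _ (show (ComplexShape.down ℕ).Rel (p + 1) p by simp) q (n - 1)
      (by rw [π_down_nat_down_int]; omega),
      ε₁_down_nat_down_int, one_smul, Category.assoc, ι_totalDesc,
      L.ιTotalOrZero_eq _ _ _ _ hpq, Homotopy.dNext_succ_chainComplex, comp_f, Category.assoc]

/- The vertical terms of the two lemmas above cancel: `h` consists of maps of vertical complexes,
and the sign `ε₂` changes between the columns `p` and `p + 1`. -/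
def totalHomotopy (h : Homotopy f g) :
    Homotopy (total.map f (ComplexShape.down ℤ)) (total.map g (ComplexShape.down ℤ)) where
  hom := totalHomotopyHom h
  zero n m hnm := totalHomotopyHom_eq_zero h hnm
  comm n := by
    ext p q hpq
    have hcomm := congr_arg (fun φ => Hom.f φ q) (h.comm p)
    simp only [add_f_apply] at hcomm
    rw [dNext_eq _ (show (ComplexShape.down ℤ).Rel n (n - 1) by simp),
      prevD_eq _ (show (ComplexShape.down ℤ).Rel (n + 1) n by simp),
      Preadditive.comp_add, Preadditive.comp_add, ιTotal_d_totalHomotopyHom,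
      ιTotal_totalHomotopyHom_d, ιTotal_map, ιTotal_map, hcomm,
      Homotopy.prevD_chainComplex, comp_f]
    simp only [Preadditive.add_comp, Category.assoc]
    abel

end HomologicalComplex₂

def HomotopyEquiv.total {C : Type*} [Category C] [Preadditive C]
    {K L : HomologicalComplex₂ C (ComplexShape.down ℕ) (ComplexShape.down ℤ)}
    [K.HasTotal (ComplexShape.down ℤ)] [L.HasTotal (ComplexShape.down ℤ)]
    (e : HomotopyEquiv K L) :
    HomotopyEquiv (K.total (ComplexShape.down ℤ)) (L.total (ComplexShape.down ℤ)) where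
  hom := HomologicalComplex₂.total.map e.hom (ComplexShape.down ℤ)
  inv := HomologicalComplex₂.total.map e.inv (ComplexShape.down ℤ)
  homotopyHomInvId := (Homotopy.ofEq (HomologicalComplex₂.total.map_comp _ _ _).symm).trans
    ((HomologicalComplex₂.totalHomotopy e.homotopyHomInvId).trans
      (Homotopy.ofEq (HomologicalComplex₂.total.map_id _ _)))
  homotopyInvHomId := (Homotopy.ofEq (HomologicalComplex₂.total.map_comp _ _ _).symm).trans
    ((HomologicalComplex₂.totalHomotopy e.homotopyInvHomId).trans
      (Homotopy.ofEq (HomologicalComplex₂.total.map_id _ _)))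

theorem quasiIso_total_map_inclusionOfMooreComplexMap {A : Type*} [Category A] [Abelian A]
    (X : SimplicialObject (ChainComplex A ℤ))
    [HomologicalComplex₂.HasTotal ((normalizedMooreComplex (ChainComplex A ℤ)).obj X)
      (ComplexShape.down ℤ)]
    [HomologicalComplex₂.HasTotal ((alternatingFaceMapComplex (ChainComplex A ℤ)).obj X)
      (ComplexShape.down ℤ)] :
    QuasiIso (HomologicalComplex₂.total.map (inclusionOfMooreComplexMap X)
      (ComplexShape.down ℤ)) :=
  (DoldKan.homotopyEquivNormalizedMooreComplexAlternatingFaceMapComplex (Y := X)).total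
    |>.quasiIso_hom

/-- For a simplicial chain complex `X`, the map `‖X‖ → |X|` from the fat geometric
realization to the geometric realization, identified with the map
`Tot^⊕(N_*(X)) → Tot^⊕(M_*(X))` induced by the inclusion of the normalized chain complex
of `X` into its Moore complex, is a quasi-isomorphism. -/
theorem statement10 {R : Type} [Ring R]
    (X : SimplicialObject (ChainComplex (ModuleCat.{0} R) ℤ))
    [HomologicalComplex₂.HasTotal
      ((normalizedMooreComplex (ChainComplex (ModuleCat.{0} R) ℤ)).obj X)
      (ComplexShape.down ℤ)]
    [HomologicalComplex₂.HasTotal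
      ((alternatingFaceMapComplex (ChainComplex (ModuleCat.{0} R) ℤ)).obj X)
      (ComplexShape.down ℤ)] :
    QuasiIso (HomologicalComplex₂.total.map (inclusionOfMooreComplexMap X)
      (ComplexShape.down ℤ)) :=
  quasiIso_total_map_inclusionOfMooreComplexMap X

end
end
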